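/- Let f be an excursion. Then the functions d_L[f], d_T[f] and d_V[f] = d_T[f] + 2·d_L[f] are continuous on [0,1]². Consequently, the quotient metric spaces obtained from [0,1] by identifying points at pseudo-distance zero under d_L[f], d_T[f], and d_V[f] respectively are compact. -/

import Mathlib

open Set Filter Topology
open scoped Classical

noncomputable section

/-- Left limit of `f` at `t`, with the convention `f(0−) = 0`. -/
def lm (f : ℝ → ℝ) (t : ℝ) : ℝ := if t = 0 then 0 else Function.leftLim f t

/-- The jump `Δ_t(f) = f t − f(t−)`. -/
def jump (f : ℝ → ℝ) (t : ℝ) : ℝ := f t - lm f t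

/-- `inf_{[s,t]} f`. -/
def infIcc (f : ℝ → ℝ) (s t : ℝ) : ℝ := sInf (f '' Icc s t)

/-- An excursion: a càdlàg function on `[0,1]`, nonnegative, vanishing at `1` (and
extended by `0` outside `[0,1]`), all of whose jumps are nonnegative. -/
structure IsExcursion (f : ℝ → ℝ) : Prop where
  nonneg : ∀ t ∈ Icc (0:ℝ) 1, 0 ≤ f t
  zero_outside : ∀ t, t ∉ Icc (0:ℝ) 1 → f t = 0
  rightCont : ∀ t ∈ Ico (0:ℝ) 1, Tendsto f (𝓝[>] t) (𝓝 (f t))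
  leftLimEx : ∀ t ∈ Ioc (0:ℝ) 1, Tendsto f (𝓝[<] t) (𝓝 (Function.leftLim f t))
  one : f 1 = 0
  jump_nonneg : ∀ t ∈ Icc (0:ℝ) 1, 0 ≤ jump f t

/-- The genealogical relation `s ⪯_f t` : `s ≤ t` and `f(s−) ≤ inf_{[s,t]} f`. -/
def pre (f : ℝ → ℝ) (s t : ℝ) : Prop := s ≤ t ∧ lm f s ≤ infIcc f s t

/-- `x_s^t(f) = 1_{s ≤ t} · max(inf_{[s,t]} f − f(s−), 0)`. -/
def xst (f : ℝ → ℝ) (s t : ℝ) : ℝ := if s ≤ t then max (infIcc f s t - lm f s) 0 else 0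

/-- The most recent common ancestor `s ∧_f t`. -/
def mrca (f : ℝ → ℝ) (s t : ℝ) : ℝ := sSup {r : ℝ | 0 ≤ r ∧ pre f r s ∧ pre f r t}

/-- `δ_t(a,b) = min(|a−b|, Δ_t(f) − |a−b|)`, the circle pseudo-distance on `[0, Δ_t(f)]`. -/
def cdel (f : ℝ → ℝ) (t a b : ℝ) : ℝ := min |a - b| (jump f t - |a - b|)

/-- `d_O(s,t) = ∑_{s ≺_f r ⪯_f t} δ_r(0, x_r^t)`. -/
def dO (f : ℝ → ℝ) (s t : ℝ) : ℝ :=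
  ∑' r : ℝ, if pre f s r ∧ s < r ∧ pre f r t then cdel f r 0 (xst f r t) else 0

/-- `d_T(s,t) = f t − inf_{[s,t]} f − ∑_{s ≺_f r ⪯_f t} x_r^t`, intended for `s ⪯_f t`. -/
def dTanc (f : ℝ → ℝ) (s t : ℝ) : ℝ :=
  f t - infIcc f s t - ∑' r : ℝ, if pre f s r ∧ s < r ∧ pre f r t then xst f r t else 0

/-- The looptree pseudo-distance `d_L[f]`. -/
def dL (f : ℝ → ℝ) (s t : ℝ) : ℝ :=
  cdel f (mrca f s t) (xst f (mrca f s t) s) (xst f (mrca f s t) t)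
    + dO f (mrca f s t) s + dO f (mrca f s t) t

/-- The tree pseudo-distance `d_T[f]`. -/
def dT (f : ℝ → ℝ) (s t : ℝ) : ℝ := dTanc f (mrca f s t) s + dTanc f (mrca f s t) t

/-- The vernation pseudo-distance `d_V[f] = d_T[f] + 2·d_L[f]`. -/
def dV (f : ℝ → ℝ) (s t : ℝ) : ℝ := dT f s t + 2 * dL f s t

/-- `Jf(t) = ∑_{r ⪯_f t} x_r^t(f)`. -/
def Jop (f : ℝ → ℝ) (t : ℝ) : ℝ := ∑' r : ℝ, if pre f r t then xst f r t else 0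

/-- `J^ε f(t) = ∑_{r ⪯_f t, Δ_r(f) ≥ ε} x_r^t(f)`. -/
def Jeps (f : ℝ → ℝ) (ε : ℝ) (t : ℝ) : ℝ :=
  ∑' r : ℝ, if pre f r t ∧ ε ≤ jump f r then xst f r t else 0

/-- Pure jump growth (PJG) excursion: `f(t) = ∑_{r ⪯_f t} x_r^t(f)` on `[0,1]`. -/
def IsPJG (f : ℝ → ℝ) : Prop := ∀ t ∈ Icc (0:ℝ) 1, f t = Jop f t

/-- An increasing bijection from `[0,1]` onto itself. -/
def IncBij (l : ℝ → ℝ) : Prop :=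
  StrictMonoOn l (Icc (0:ℝ) 1) ∧ Set.BijOn l (Icc (0:ℝ) 1) (Icc (0:ℝ) 1)

/-- The Skorokhod distance `ρ` on functions `[0,1] → ℝ`. -/
def skor (f g : ℝ → ℝ) : ℝ :=
  sInf {c : ℝ | 0 ≤ c ∧ ∃ l : ℝ → ℝ, IncBij l ∧
    ∀ x ∈ Icc (0:ℝ) 1, |l x - x| ≤ c ∧ |f x - g (l x)| ≤ c}


/-!
`d_L[f]` and `d_T[f]` are pseudo-distances on `[0,1]`. The sums defining `d_O` and `d_T` are
additive along an ancestral line, and of the three most recent common ancestors of three points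
two coincide and are ancestors of the third; this reduces the triangle inequality to that of the
circle distance `δ` on a single loop.

For `s < t` the minimum of `f` on `[s ∧_f t, t]` is attained in `[s, t]`, which gives both
pseudo-distances the bound `f(s) + f(t−) − 2 inf_{[s,t]} f`. As `f` is càdlàg, this bound tends
to `0` as `t → s` from either side, so `d(s, ·)` is continuous at `s`, and the triangle
inequality makes `d` jointly continuous. The metric quotient of `[0,1]` by a continuous
pseudo-distance is a continuous image of `[0,1]`, hence compact.
-/

structure IsPseudoDistOn {α : Type*} (D : α → α → ℝ) (S : Set α) : Prop where
  self_eq_zero : ∀ s ∈ S, D s s = 0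
  symm : ∀ s ∈ S, ∀ t ∈ S, D s t = D t s
  triangle : ∀ s ∈ S, ∀ t ∈ S, ∀ u ∈ S, D s u ≤ D s t + D t u

/-- A copy of `S` carrying the pseudometric `D` instead of the topology it inherits from `α`. -/
structure PseudoDistSpace {α : Type*} (D : α → α → ℝ) (S : Set α) where
  point : S

namespace IsPseudoDistOn

variable {α : Type*} {D D' : α → α → ℝ} {S : Set α}

lemma nonneg (h : IsPseudoDistOn D S) {s t : α} (hs : s ∈ S) (ht : t ∈ S) : 0 ≤ D s t := by
  have := h.triangle s hs t ht s hs
  rw [h.self_eq_zero s hs, h.symm t ht s hs] at this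
  linarith

lemma add (h : IsPseudoDistOn D S) (h' : IsPseudoDistOn D' S) :
    IsPseudoDistOn (fun s t => D s t + D' s t) S where
  self_eq_zero s hs := by simp [h.self_eq_zero s hs, h'.self_eq_zero s hs]
  symm s hs t ht := by rw [h.symm s hs t ht, h'.symm s hs t ht]
  triangle s hs t ht u hu := by
    linarith [h.triangle s hs t ht u hu, h'.triangle s hs t ht u hu]

lemma const_mul (h : IsPseudoDistOn D S) {c : ℝ} (hc : 0 ≤ c) :
    IsPseudoDistOn (fun s t => c * D s t) S where
  self_eq_zero s hs := by simp [h.self_eq_zero s hs]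
  symm s hs t ht := by rw [h.symm s hs t ht]
  triangle s hs t ht u hu := by
    nlinarith [h.triangle s hs t ht u hu]

lemma abs_sub_le (h : IsPseudoDistOn D S) {s t s' t' : α} (hs : s ∈ S) (ht : t ∈ S)
    (hs' : s' ∈ S) (ht' : t' ∈ S) : |D s' t' - D s t| ≤ D s s' + D t t' := by
  rw [abs_le]
  constructor
  · linarith [h.triangle s hs s' hs' t ht, h.triangle s' hs' t' ht' t ht, h.symm t' ht' t ht]
  · linarith [h.triangle s' hs' s hs t' ht', h.triangle s hs t ht t' ht', h.symm s' hs' s hs]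

variable [TopologicalSpace α]

lemma continuousOn (h : IsPseudoDistOn D S) (hD : ∀ s ∈ S, Tendsto (D s) (𝓝[S] s) (𝓝 0)) :
    ContinuousOn (fun p : α × α => D p.1 p.2) (S ×ˢ S) := by
  rintro ⟨s, t⟩ ⟨hs, ht⟩
  have hfst : Tendsto Prod.fst (𝓝[S ×ˢ S] (s, t)) (𝓝[S] s) :=
    continuous_fst.continuousWithinAt.tendsto_nhdsWithin mapsTo_fst_prod
  have hsnd : Tendsto Prod.snd (𝓝[S ×ˢ S] (s, t)) (𝓝[S] t) :=
    continuous_snd.continuousWithinAt.tendsto_nhdsWithin mapsTo_snd_prod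
  refine tendsto_iff_dist_tendsto_zero.2 (squeeze_zero' (Eventually.of_forall fun _ => dist_nonneg)
    ?_ (by simpa using ((hD s hs).comp hfst).add ((hD t ht).comp hsnd)))
  filter_upwards [self_mem_nhdsWithin] with p hp
  exact (Real.dist_eq _ _).trans_le (h.abs_sub_le hs ht hp.1 hp.2)

end IsPseudoDistOn

lemma IsPseudoDistOn.exists_compactSpace_quotient {α : Type} [TopologicalSpace α]
    {D : α → α → ℝ} {S : Set α} (h : IsPseudoDistOn D S) (hS : IsCompact S) (hD : ∀ s ∈ S, Tendsto (D s) (𝓝[S] s) (𝓝 0)) :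
    ∃ (X : Type) (_ : MetricSpace X) (q : S → X), CompactSpace X ∧ Function.Surjective q ∧
      ∀ s t : S, dist (q s) (q t) = D s t := by
  let _ : PseudoMetricSpace (PseudoDistSpace D S) :=
    { dist := fun x y => D x.point y.point
      dist_self := fun x => h.self_eq_zero _ x.point.2
      dist_comm := fun x y => h.symm _ x.point.2 _ y.point.2
      dist_triangle := fun x y z => h.triangle _ x.point.2 _ y.point.2 _ z.point.2 }
  have hsurj : Function.Surjective (PseudoDistSpace.mk : S → PseudoDistSpace D S) :=
    fun x => ⟨x.point, rfl⟩
  have hcont : Continuous (PseudoDistSpace.mk : S → PseudoDistSpace D S) := by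
    refine continuous_iff_continuousAt.2 fun s => tendsto_iff_dist_tendsto_zero.2 ?_
    refine ((tendsto_nhdsWithin_iff_subtype s.2 (D s) _).1 (hD s s.2)).congr fun t => ?_
    exact h.symm _ s.2 _ t.2
  have hq := SeparationQuotient.surjective_mk.comp hsurj
  have : CompactSpace S := isCompact_iff_compactSpace.1 hS
  exact ⟨SeparationQuotient (PseudoDistSpace D S), inferInstance, _,
    hq.compactSpace (SeparationQuotient.continuous_mk.comp hcont), hq,
    fun _ _ => SeparationQuotient.dist_mk _ _⟩

variable {f : ℝ → ℝ}

lemma infIcc_self (f : ℝ → ℝ) (s : ℝ) : infIcc f s s = f s := by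
  rw [infIcc, Icc_self, image_singleton, csInf_singleton]

lemma le_infIcc {c s t : ℝ} (hst : s ≤ t) (h : ∀ v ∈ Icc s t, c ≤ f v) : c ≤ infIcc f s t :=
  le_csInf ((nonempty_Icc.2 hst).image f) (forall_mem_image.2 h)

lemma lm_of_pos {t : ℝ} (ht : 0 < t) : lm f t = Function.leftLim f t := if_neg ht.ne'

namespace IsExcursion

lemma apply_nonneg (hf : IsExcursion f) (t : ℝ) : 0 ≤ f t := by
  by_cases ht : t ∈ Icc (0:ℝ) 1
  · exact hf.nonneg t ht
  · rw [hf.zero_outside t ht]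

lemma bddBelow_image (hf : IsExcursion f) (S : Set ℝ) : BddBelow (f '' S) :=
  ⟨0, forall_mem_image.2 fun t _ => hf.apply_nonneg t⟩

lemma infIcc_le (hf : IsExcursion f) {s t v : ℝ} (hv : v ∈ Icc s t) : infIcc f s t ≤ f v :=
  csInf_le (hf.bddBelow_image _) (mem_image_of_mem f hv)

lemma infIcc_nonneg (hf : IsExcursion f) (s t : ℝ) : 0 ≤ infIcc f s t :=
  Real.sInf_nonneg (forall_mem_image.2 fun v _ => hf.apply_nonneg v)

lemma infIcc_le_right (hf : IsExcursion f) (s t : ℝ) : infIcc f s t ≤ f t := by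
  rcases le_or_gt s t with hst | hts
  · exact hf.infIcc_le ⟨hst, le_rfl⟩
  · rw [infIcc, Icc_eq_empty hts.not_ge, image_empty, Real.sInf_empty]
    exact hf.apply_nonneg t

lemma infIcc_anti (hf : IsExcursion f) {s s' t t' : ℝ} (hs : s' ≤ s) (ht : t ≤ t') (hst : s ≤ t) :
    infIcc f s' t' ≤ infIcc f s t :=
  csInf_le_csInf (hf.bddBelow_image _) ((nonempty_Icc.2 hst).image f)
    (image_mono (Icc_subset_Icc hs ht))

lemma infIcc_eq_min (hf : IsExcursion f) {a b c : ℝ} (hab : a ≤ b) (hbc : b ≤ c) :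
    infIcc f a c = min (infIcc f a b) (infIcc f b c) := by
  rw [infIcc, ← Icc_union_Icc_eq_Icc hab hbc, image_union,
    csInf_union (hf.bddBelow_image _) ((nonempty_Icc.2 hab).image f) (hf.bddBelow_image _)
      ((nonempty_Icc.2 hbc).image f)]
  rfl

lemma tendsto_lm (hf : IsExcursion f) {t : ℝ} (ht : t ∈ Ioc (0:ℝ) 1) :
    Tendsto f (𝓝[<] t) (𝓝 (lm f t)) := by
  rw [lm_of_pos ht.1]
  exact hf.leftLimEx t ht

lemma le_lm_of_forall_Ioo (hf : IsExcursion f) {c l t : ℝ} (ht : t ∈ Ioc (0:ℝ) 1) (hlt : l < t)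
    (h : ∀ v ∈ Ioo l t, c ≤ f v) : c ≤ lm f t :=
  ge_of_tendsto (hf.tendsto_lm ht) (eventually_of_mem (Ioo_mem_nhdsLT hlt) h)

lemma lm_le_of_forall_Ioo (hf : IsExcursion f) {c l t : ℝ} (ht : t ∈ Ioc (0:ℝ) 1) (hlt : l < t)
    (h : ∀ v ∈ Ioo l t, f v ≤ c) : lm f t ≤ c :=
  le_of_tendsto (hf.tendsto_lm ht) (eventually_of_mem (Ioo_mem_nhdsLT hlt) h)

lemma exists_Ioo_lt_of_lt_lm (hf : IsExcursion f) {c t : ℝ} (ht : t ∈ Ioc (0:ℝ) 1)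
    (hc : c < lm f t) : ∃ l < t, ∀ v ∈ Ioo l t, c < f v :=
  mem_nhdsLT_iff_exists_Ioo_subset.1 ((hf.tendsto_lm ht).eventually_const_lt hc)

lemma lm_le_self (hf : IsExcursion f) {t : ℝ} (ht : t ∈ Icc (0:ℝ) 1) : lm f t ≤ f t :=
  sub_nonneg.1 (hf.jump_nonneg t ht)

lemma infIcc_le_lm (hf : IsExcursion f) {s t : ℝ} (hs : 0 ≤ s) (hst : s < t) (ht : t ≤ 1) :
    infIcc f s t ≤ lm f t :=
  hf.le_lm_of_forall_Ioo ⟨hs.trans_lt hst, ht⟩ hst fun _ hv => hf.infIcc_le ⟨hv.1.le, hv.2.le⟩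

lemma pre_refl (hf : IsExcursion f) {t : ℝ} (ht : t ∈ Icc (0:ℝ) 1) : pre f t t :=
  ⟨le_rfl, by rw [infIcc_self]; exact hf.lm_le_self ht⟩

lemma pre_zero (hf : IsExcursion f) {t : ℝ} (ht : 0 ≤ t) : pre f 0 t :=
  ⟨ht, by simpa [lm] using hf.infIcc_nonneg 0 t⟩

lemma pre_trans (hf : IsExcursion f) {a b c : ℝ} (ha : 0 ≤ a) (hc : c ≤ 1)
    (hab : pre f a b) (hbc : pre f b c) : pre f a c := by
  refine ⟨hab.1.trans hbc.1, ?_⟩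
  rcases hab.1.eq_or_lt with rfl | hlt
  · exact hbc.2
  · rw [hf.infIcc_eq_min hab.1 hbc.1]
    exact le_min hab.2 (hab.2.trans ((hf.infIcc_le_lm ha hlt (hbc.1.trans hc)).trans hbc.2))

lemma pre_of_pre_of_le (hf : IsExcursion f) {r₁ r₂ t : ℝ}
    (h₁ : pre f r₁ t) (h₂ : pre f r₂ t) (hle : r₁ ≤ r₂) : pre f r₁ r₂ :=
  ⟨hle, h₁.2.trans (hf.infIcc_anti le_rfl h₂.1 hle)⟩

lemma pre_csSup (hf : IsExcursion f) {A : Set ℝ} {s : ℝ} (hs : s ≤ 1) (hne : A.Nonempty)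
    (hA₀ : ∀ r ∈ A, 0 ≤ r) (hA : ∀ r ∈ A, pre f r s) : pre f (sSup A) s := by
  have hbdd : BddAbove A := ⟨s, fun r hr => (hA r hr).1⟩
  have hms : sSup A ≤ s := csSup_le hne fun r hr => (hA r hr).1
  refine ⟨hms, ?_⟩
  obtain ⟨a, ha⟩ := hne
  rcases ((hA₀ a ha).trans (le_csSup hbdd ha)).eq_or_lt with hm0 | hm0
  · rw [lm, if_pos hm0.symm]
    exact hf.infIcc_nonneg _ _
  by_contra! hlt
  obtain ⟨c, hc, hcm⟩ := exists_between hlt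
  obtain ⟨l, hlm, hl⟩ := hf.exists_Ioo_lt_of_lt_lm ⟨hm0, hms.trans hs⟩ hcm
  obtain ⟨r, hrA, hr⟩ := exists_lt_of_lt_csSup ⟨a, ha⟩ (max_lt hlm hm0)
  have hrm : r ≤ sSup A := le_csSup hbdd hrA
  have hrc : lm f r < c := ((hA r hrA).2.trans (hf.infIcc_anti hrm le_rfl hms)).trans_lt hc
  rcases hrm.eq_or_lt with rfl | hrm
  · exact hrc.not_gt hcm
  · refine hrc.not_ge (hf.le_lm_of_forall_Ioo ⟨(le_max_right l 0).trans_lt hr,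
      hrm.le.trans (hms.trans hs)⟩ ((le_max_left l 0).trans_lt hr) fun v hv => ?_)
    exact (hl v ⟨hv.1, hv.2.trans hrm⟩).le

lemma mrca_spec (hf : IsExcursion f) {s t : ℝ} (hs : s ∈ Icc (0:ℝ) 1) (ht : t ∈ Icc (0:ℝ) 1) :
    0 ≤ mrca f s t ∧ pre f (mrca f s t) s ∧ pre f (mrca f s t) t := by
  have h0 : (0:ℝ) ∈ {r : ℝ | 0 ≤ r ∧ pre f r s ∧ pre f r t} :=
    ⟨le_rfl, hf.pre_zero hs.1, hf.pre_zero ht.1⟩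
  exact ⟨le_csSup ⟨s, fun r hr => hr.2.1.1⟩ h0,
    hf.pre_csSup hs.2 ⟨0, h0⟩ (fun r hr => hr.1) (fun r hr => hr.2.1),
    hf.pre_csSup ht.2 ⟨0, h0⟩ (fun r hr => hr.1) (fun r hr => hr.2.2)⟩

end IsExcursion

lemma le_mrca {s t r : ℝ} (h0 : 0 ≤ r) (hs : pre f r s) (ht : pre f r t) : r ≤ mrca f s t :=
  le_csSup ⟨s, fun _ hx => hx.2.1.1⟩ ⟨h0, hs, ht⟩

lemma mrca_comm (f : ℝ → ℝ) (s t : ℝ) : mrca f s t = mrca f t s := by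
  simp only [mrca, and_comm (a := pre f _ s)]

lemma IsExcursion.mrca_self (hf : IsExcursion f) {s : ℝ} (hs : s ∈ Icc (0:ℝ) 1) :
    mrca f s s = s :=
  le_antisymm (hf.mrca_spec hs hs).2.1.1 (le_mrca hs.1 (hf.pre_refl hs) (hf.pre_refl hs))

namespace IsExcursion

lemma infIcc_le_infIcc_mrca (hf : IsExcursion f) {s t : ℝ} (hs : s ∈ Icc (0:ℝ) 1)
    (ht : t ∈ Icc (0:ℝ) 1) (hst : s ≤ t) : infIcc f s t ≤ infIcc f (mrca f s t) s := by
  obtain ⟨hm0, hms, -⟩ := hf.mrca_spec hs ht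
  set m := mrca f s t
  set c := infIcc f s t
  have hcs : ∀ u ∈ Icc s t, c ≤ f u := fun u hu => hf.infIcc_le hu
  -- `f ≥ c` on `[w, s]`; if `m < w`, then `w` would be a common ancestor of `s` and `t`
  set W := {v ∈ Icc m s | ∀ u ∈ Icc v s, c ≤ f u}
  have hsW : s ∈ W := ⟨⟨hms.1, le_rfl⟩, fun u hu => hcs u ⟨hu.1, hu.2.trans hst⟩⟩
  have hbdd : BddBelow W := ⟨m, fun v hv => hv.1.1⟩
  set w := sInf W
  have hmw : m ≤ w := le_csInf ⟨s, hsW⟩ fun v hv => hv.1.1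
  have hws : w ≤ s := csInf_le hbdd hsW
  have hgt : ∀ u ∈ Ioc w s, c ≤ f u := fun u hu => by
    obtain ⟨v, hvW, hvu⟩ := exists_lt_of_csInf_lt ⟨s, hsW⟩ hu.1
    exact hvW.2 u ⟨hvu.le, hu.2⟩
  have hw : ∀ u ∈ Icc w s, c ≤ f u := by
    intro u hu
    rcases hu.1.eq_or_lt with rfl | hwu
    · rcases hws.eq_or_lt with hws | hws
      · exact hws ▸ hcs _ ⟨le_rfl, hst⟩
      · exact ge_of_tendsto (hf.rightCont _ ⟨hm0.trans hmw, hws.trans_le hs.2⟩)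
          (eventually_of_mem (Ioo_mem_nhdsGT hws) fun u hu => hgt u ⟨hu.1, hu.2.le⟩)
    · exact hgt u ⟨hwu, hu.2⟩
  suffices hwm : w ≤ m from le_infIcc hms.1 (le_antisymm hwm hmw ▸ hw)
  by_contra! hmw
  have hlm : lm f w ≤ c := by
    by_contra! hc
    obtain ⟨l, hlw, hl⟩ := hf.exists_Ioo_lt_of_lt_lm ⟨hm0.trans_lt hmw, hws.trans hs.2⟩ hc
    obtain ⟨v, hv, hvw⟩ := exists_between (max_lt hlw hmw)
    have hvW : v ∈ W := by
      refine ⟨⟨(le_max_right _ _).trans hv.le, hvw.le.trans hws⟩, fun u hu => ?_⟩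
      rcases lt_or_ge u w with huw | hwu
      · exact (hl u ⟨(le_max_left _ _).trans_lt (hv.trans_le hu.1), huw⟩).le
      · exact hw u ⟨hwu, hu.2⟩
    exact (csInf_le hbdd hvW).not_gt hvw
  have hwt : ∀ u ∈ Icc w t, c ≤ f u := fun u hu =>
    (le_total u s).elim (fun hus => hw u ⟨hu.1, hus⟩) (fun hsu => hcs u ⟨hsu, hu.2⟩)
  have hpre_s : pre f w s := ⟨hws, hlm.trans (le_infIcc hws hw)⟩
  have hpre_t : pre f w t := ⟨hws.trans hst, hlm.trans (le_infIcc (hws.trans hst) hwt)⟩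
  exact hmw.not_ge (le_mrca (hm0.trans hmw.le) hpre_s hpre_t)

lemma infIcc_mrca (hf : IsExcursion f) {s t : ℝ} (hs : s ∈ Icc (0:ℝ) 1)
    (ht : t ∈ Icc (0:ℝ) 1) (hst : s ≤ t) : infIcc f (mrca f s t) t = infIcc f s t := by
  rw [hf.infIcc_eq_min (hf.mrca_spec hs ht).2.1.1 hst,
    min_eq_right (hf.infIcc_le_infIcc_mrca hs ht hst)]

lemma mrca_cases (hf : IsExcursion f) {s t u : ℝ} (hs : s ∈ Icc (0:ℝ) 1)
    (ht : t ∈ Icc (0:ℝ) 1) (hu : u ∈ Icc (0:ℝ) 1) (hle : mrca f s t ≤ mrca f t u) :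
    (mrca f s u = mrca f s t ∧ pre f (mrca f s t) (mrca f t u)) ∨
    (mrca f t u = mrca f s t ∧ pre f (mrca f s t) (mrca f s u)) := by
  obtain ⟨h₁0, h₁s, h₁t⟩ := hf.mrca_spec hs ht
  obtain ⟨h₂0, h₂t, h₂u⟩ := hf.mrca_spec ht hu
  obtain ⟨h₃0, h₃s, h₃u⟩ := hf.mrca_spec hs hu
  have h₁₂ : pre f (mrca f s t) (mrca f t u) := hf.pre_of_pre_of_le h₁t h₂t hle
  have h₁₃ : mrca f s t ≤ mrca f s u := le_mrca h₁0 h₁s (hf.pre_trans h₁0 hu.2 h₁₂ h₂u)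
  rcases le_or_gt (mrca f s u) (mrca f t u) with h₃₂ | h₂₃
  · have h₃t : pre f (mrca f s u) t := hf.pre_trans h₃0 ht.2 (hf.pre_of_pre_of_le h₃u h₂u h₃₂) h₂t
    exact Or.inl ⟨le_antisymm (le_mrca h₃0 h₃s h₃t) h₁₃, h₁₂⟩
  · have h₂s : pre f (mrca f t u) s :=
      hf.pre_trans h₂0 hs.2 (hf.pre_of_pre_of_le h₂u h₃u h₂₃.le) h₃s
    have h₂₁ : mrca f t u = mrca f s t := le_antisymm (le_mrca h₂0 h₂s h₂t) hle
    exact Or.inr ⟨h₂₁, h₂₁ ▸ hf.pre_of_pre_of_le h₂u h₃u h₂₃.le⟩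

end IsExcursion

lemma xst_nonneg (f : ℝ → ℝ) (s t : ℝ) : 0 ≤ xst f s t := by
  unfold xst
  split_ifs
  exacts [le_max_right _ _, le_rfl]

lemma xst_of_pre {r t : ℝ} (h : pre f r t) : xst f r t = infIcc f r t - lm f r := by
  rw [xst, if_pos h.1, max_eq_left (sub_nonneg.2 h.2)]

lemma cdel_comm (f : ℝ → ℝ) (w a b : ℝ) : cdel f w a b = cdel f w b a := by
  rw [cdel, cdel, abs_sub_comm]

lemma cdel_self {w : ℝ} (h : 0 ≤ jump f w) (a : ℝ) : cdel f w a a = 0 := by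
  rw [cdel, sub_self, abs_zero, sub_zero, min_eq_left h]

lemma cdel_nonneg {w a b : ℝ} (ha : a ∈ Icc 0 (jump f w)) (hb : b ∈ Icc 0 (jump f w)) :
    0 ≤ cdel f w a b :=
  le_min (abs_nonneg _) (sub_nonneg.2 (abs_sub_le_iff.2 ⟨by linarith [ha.2, hb.1],
    by linarith [ha.1, hb.2]⟩))

lemma cdel_le_abs (f : ℝ → ℝ) (w a b : ℝ) : cdel f w a b ≤ |a - b| := min_le_left _ _

lemma cdel_zero_le {w b : ℝ} (hb : 0 ≤ b) : cdel f w 0 b ≤ b := by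
  simpa [abs_of_nonneg hb] using cdel_le_abs f w 0 b

lemma cdel_zero_jump {w : ℝ} (h : 0 ≤ jump f w) : cdel f w 0 (jump f w) = 0 := by
  rw [cdel, zero_sub, abs_neg, abs_of_nonneg h, sub_self, min_eq_right h]

lemma cdel_triangle {w a b c : ℝ} (ha : a ∈ Icc 0 (jump f w)) (hb : b ∈ Icc 0 (jump f w))
    (hc : c ∈ Icc 0 (jump f w)) : cdel f w a c ≤ cdel f w a b + cdel f w b c := by
  have h₁ : |a - c| ≤ |a - b| + |b - c| := abs_sub_le a b c
  have h₂ : |b - c| ≤ |a - b| + |a - c| := by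
    simpa [abs_sub_comm b a] using abs_sub_le b a c
  have h₃ : |a - b| ≤ |a - c| + |b - c| := by
    simpa [abs_sub_comm c b] using abs_sub_le a c b
  -- the three points lie on a circle of length `jump f w`
  have h₄ : |a - b| + |b - c| + |a - c| ≤ 2 * jump f w := by
    rcases abs_cases (a - b) with ⟨e₁, _⟩ | ⟨e₁, _⟩ <;>
    rcases abs_cases (b - c) with ⟨e₂, _⟩ | ⟨e₂, _⟩ <;>
    rcases abs_cases (a - c) with ⟨e₃, _⟩ | ⟨e₃, _⟩ <;>
    rw [e₁, e₂, e₃] <;> linarith [ha.1, ha.2, hb.1, hb.2, hc.1, hc.2]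
  rw [cdel, cdel, cdel]
  rcases min_cases |a - b| (jump f w - |a - b|) with ⟨e₁, _⟩ | ⟨e₁, _⟩ <;>
  rcases min_cases |b - c| (jump f w - |b - c|) with ⟨e₂, _⟩ | ⟨e₂, _⟩ <;>
  rw [e₁, e₂]
  · exact (min_le_left _ _).trans h₁
  · exact (min_le_right _ _).trans (by linarith)
  · exact (min_le_right _ _).trans (by linarith)
  · exact (min_le_left _ _).trans (by linarith)

namespace IsExcursion

lemma xst_mem_Icc (hf : IsExcursion f) {r t : ℝ} (h : pre f r t) :
    xst f r t ∈ Icc 0 (jump f r) := by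
  refine ⟨xst_nonneg f r t, ?_⟩
  rw [xst_of_pre h, jump]
  linarith [hf.infIcc_le ⟨le_refl r, h.1⟩]

lemma xst_self (hf : IsExcursion f) {r : ℝ} (hr : r ∈ Icc (0:ℝ) 1) : xst f r r = jump f r := by
  rw [xst_of_pre (hf.pre_refl hr), infIcc_self, jump]

lemma infIcc_of_lt_of_pre (hf : IsExcursion f) {r b c : ℝ} (hr : 0 ≤ r) (hc : c ≤ 1)
    (hrb : r < b) (hbc : pre f b c) : infIcc f r c = infIcc f r b := by
  rw [hf.infIcc_eq_min hrb.le hbc.1]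
  exact min_eq_left ((hf.infIcc_le_lm hr hrb (hbc.1.trans hc)).trans hbc.2)

lemma xst_of_lt_of_pre (hf : IsExcursion f) {r b c : ℝ} (hr : 0 ≤ r) (hc : c ≤ 1)
    (hrb : r < b) (hbc : pre f b c) : xst f r c = xst f r b := by
  rw [xst, xst, if_pos (hrb.le.trans hbc.1), if_pos hrb.le,
    hf.infIcc_of_lt_of_pre hr hc hrb hbc]

end IsExcursion

/-- The summand of `∑_{a ≺_f r ⪯_f b} φ_r(x_r^b)`. The sum is `d_O(a,b)` for `φ_r = δ_r(0, ·)`,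
and the sum subtracted in `d_T(a,b)` for `φ_r = id`. -/
def ancTerm (f : ℝ → ℝ) (φ : ℝ → ℝ → ℝ) (a b r : ℝ) : ℝ :=
  if pre f a r ∧ a < r ∧ pre f r b then φ r (xst f r b) else 0

lemma dO_eq_tsum (f : ℝ → ℝ) (a b : ℝ) :
    dO f a b = ∑' r, ancTerm f (fun r => cdel f r 0) a b r := rfl

lemma dTanc_eq_sub_tsum (f : ℝ → ℝ) (a b : ℝ) :
    dTanc f a b = f b - infIcc f a b - ∑' r, ancTerm f (fun _ => id) a b r := rfl

lemma ancTerm_self (φ : ℝ → ℝ → ℝ) (a r : ℝ) : ancTerm f φ a a r = 0 :=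
  if_neg fun h => h.2.1.not_ge h.2.2.1

lemma ancTerm_id_nonneg (a b r : ℝ) : 0 ≤ ancTerm f (fun _ => id) a b r := by
  unfold ancTerm
  split_ifs
  exacts [xst_nonneg f r b, le_rfl]

namespace IsExcursion

lemma abs_ancTerm_le (hf : IsExcursion f) {φ : ℝ → ℝ → ℝ}
    (hφ : ∀ r, ∀ y ∈ Icc 0 (jump f r), |φ r y| ≤ y) (a b r : ℝ) :
    |ancTerm f φ a b r| ≤ ancTerm f (fun _ => id) a b r := by
  unfold ancTerm
  split_ifs with h
  exacts [hφ r _ (hf.xst_mem_Icc h.2.2), by simp]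

lemma sum_xst_le (hf : IsExcursion f) {a b : ℝ} (ha : 0 ≤ a) (hb : b ≤ 1) (F : Finset ℝ)
    (hF : ∀ r ∈ F, pre f a r ∧ a < r ∧ pre f r b) : ∑ r ∈ F, xst f r b ≤ f b - infIcc f a b := by
  induction F using Finset.induction_on_min generalizing a with
  | empty => simpa using hf.infIcc_le_right a b
  | insert r F hrF ih =>
    obtain ⟨-, har, hrb⟩ := hF r (Finset.mem_insert_self r F)
    have hF' : ∀ r' ∈ F, pre f r r' ∧ r < r' ∧ pre f r' b := fun r' hr' => by
      have hr'b := (hF r' (Finset.mem_insert_of_mem hr')).2.2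
      exact ⟨hf.pre_of_pre_of_le hrb hr'b (hrF r' hr').le, hrF r' hr', hr'b⟩
    rw [Finset.sum_insert fun h => (hrF r h).false, xst_of_pre hrb]
    linarith [ih (ha.trans har.le) hF', hf.infIcc_anti le_rfl hrb.1 har.le,
      hf.infIcc_le_lm ha har (hrb.1.trans hb)]

lemma summable_ancTerm_id (hf : IsExcursion f) {a b : ℝ} (ha : 0 ≤ a) (hb : b ≤ 1) :
    Summable (ancTerm f (fun _ => id) a b) :=
  summable_of_sum_le (fun r => ancTerm_id_nonneg a b r) fun F => by
    simpa only [ancTerm, id, ← Finset.sum_filter] using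
      hf.sum_xst_le ha hb _ fun r hr => (Finset.mem_filter.1 hr).2

lemma tsum_ancTerm_id_le (hf : IsExcursion f) {a b : ℝ} (ha : 0 ≤ a) (hb : b ≤ 1) :
    ∑' r, ancTerm f (fun _ => id) a b r ≤ f b - infIcc f a b :=
  (hf.summable_ancTerm_id ha hb).tsum_le_of_sum_le fun F => by
    simpa only [ancTerm, id, ← Finset.sum_filter] using
      hf.sum_xst_le ha hb _ fun r hr => (Finset.mem_filter.1 hr).2

lemma summable_ancTerm (hf : IsExcursion f) {φ : ℝ → ℝ → ℝ}
    (hφ : ∀ r, ∀ y ∈ Icc 0 (jump f r), |φ r y| ≤ y) {a b : ℝ} (ha : 0 ≤ a) (hb : b ≤ 1) :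
    Summable (ancTerm f φ a b) :=
  (hf.summable_ancTerm_id ha hb).of_norm_bounded (hf.abs_ancTerm_le hφ a b)

lemma ancTerm_split (hf : IsExcursion f) (φ : ℝ → ℝ → ℝ) {a b c : ℝ} (ha : 0 ≤ a) (hc : c ≤ 1)
    (hab : pre f a b) (hlt : a < b) (hbc : pre f b c) (r : ℝ) :
    ancTerm f φ a c r = ancTerm f φ a b r + ancTerm f φ b c r +
      if r = b then φ b (xst f b c) - φ b (jump f b) else 0 := by
  have hb : b ∈ Icc (0:ℝ) 1 := ⟨ha.trans hlt.le, hbc.1.trans hc⟩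
  unfold ancTerm
  rcases lt_trichotomy r b with hr | rfl | hr
  · have hrc : ¬(pre f b r ∧ b < r ∧ pre f r c) := fun h => h.2.1.not_gt hr
    by_cases h : pre f a r ∧ a < r ∧ pre f r b
    · rw [if_pos ⟨h.1, h.2.1, hf.pre_trans (ha.trans h.2.1.le) hc h.2.2 hbc⟩, if_pos h, if_neg hrc,
        if_neg hr.ne, hf.xst_of_lt_of_pre (ha.trans h.2.1.le) hc hr hbc]
      ring
    · rw [if_neg fun h' => h ⟨h'.1, h'.2.1, hf.pre_of_pre_of_le h'.2.2 hbc hr.le⟩, if_neg h,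
        if_neg hrc, if_neg hr.ne]
      ring
  · rw [if_pos ⟨hab, hlt, hbc⟩, if_pos ⟨hab, hlt, hf.pre_refl hb⟩, if_neg fun h => h.2.1.false,
      if_pos rfl, hf.xst_self hb]
    ring
  · have hra : ¬(pre f a r ∧ a < r ∧ pre f r b) := fun h => h.2.2.1.not_gt hr
    by_cases h : pre f b r ∧ b < r ∧ pre f r c
    · rw [if_pos ⟨hf.pre_trans ha (h.2.2.1.trans hc) hab h.1, hlt.trans hr, h.2.2⟩, if_neg hra,
        if_pos h, if_neg hr.ne']
      ring
    · rw [if_neg fun h' => h ⟨hf.pre_of_pre_of_le hbc h'.2.2 hr.le, hr, h'.2.2⟩, if_neg hra,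
        if_neg h, if_neg hr.ne']
      ring

lemma tsum_ancTerm_split (hf : IsExcursion f) {φ : ℝ → ℝ → ℝ}
    (hφ : ∀ r, ∀ y ∈ Icc 0 (jump f r), |φ r y| ≤ y) {a b c : ℝ} (ha : 0 ≤ a) (hc : c ≤ 1)
    (hab : pre f a b) (hlt : a < b) (hbc : pre f b c) :
    ∑' r, ancTerm f φ a c r = ∑' r, ancTerm f φ a b r + ∑' r, ancTerm f φ b c r +
      (φ b (xst f b c) - φ b (jump f b)) := by
  have hsingle := hasSum_ite_eq b (φ b (xst f b c) - φ b (jump f b))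
  rw [tsum_congr (hf.ancTerm_split φ ha hc hab hlt hbc),
    ((hf.summable_ancTerm hφ ha (hbc.1.trans hc)).add
      (hf.summable_ancTerm hφ (ha.trans hab.1) hc)).tsum_add hsingle.summable,
    (hf.summable_ancTerm hφ ha (hbc.1.trans hc)).tsum_add
      (hf.summable_ancTerm hφ (ha.trans hab.1) hc), hsingle.tsum_eq]

end IsExcursion

lemma dTanc_self (f : ℝ → ℝ) (a : ℝ) : dTanc f a a = 0 := by
  simp [dTanc_eq_sub_tsum, ancTerm_self, infIcc_self]

lemma dO_self (f : ℝ → ℝ) (a : ℝ) : dO f a a = 0 := by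
  simp [dO_eq_tsum, ancTerm_self]

lemma dTanc_le (f : ℝ → ℝ) (a b : ℝ) : dTanc f a b ≤ f b - infIcc f a b := by
  have : 0 ≤ ∑' r, ancTerm f (fun _ => id) a b r := tsum_nonneg fun r => ancTerm_id_nonneg a b r
  rw [dTanc_eq_sub_tsum]
  linarith

lemma abs_cdel_zero_le {r y : ℝ} (hy : y ∈ Icc 0 (jump f r)) : |cdel f r 0 y| ≤ y := by
  rw [abs_of_nonneg (cdel_nonneg ⟨le_rfl, hy.1.trans hy.2⟩ hy)]
  exact cdel_zero_le hy.1

namespace IsExcursion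

lemma dTanc_nonneg (hf : IsExcursion f) {a b : ℝ} (ha : 0 ≤ a) (hb : b ≤ 1) : 0 ≤ dTanc f a b := by
  rw [dTanc_eq_sub_tsum]
  linarith [hf.tsum_ancTerm_id_le ha hb]

lemma dO_nonneg (hf : IsExcursion f) (a b : ℝ) : 0 ≤ dO f a b := by
  refine tsum_nonneg fun r => ?_
  split_ifs with h
  · have hx := hf.xst_mem_Icc h.2.2
    exact cdel_nonneg ⟨le_rfl, hx.1.trans hx.2⟩ hx
  · exact le_rfl

lemma dO_le_tsum (hf : IsExcursion f) {a b : ℝ} (ha : 0 ≤ a) (hb : b ≤ 1) :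
    dO f a b ≤ ∑' r, ancTerm f (fun _ => id) a b r :=
  (hf.summable_ancTerm (fun _ _ => abs_cdel_zero_le) ha hb).tsum_le_tsum
    (fun r => (le_abs_self _).trans (hf.abs_ancTerm_le (fun _ _ => abs_cdel_zero_le) a b r))
    (hf.summable_ancTerm_id ha hb)

lemma dO_le (hf : IsExcursion f) {a b : ℝ} (ha : 0 ≤ a) (hb : b ≤ 1) :
    dO f a b ≤ f b - infIcc f a b :=
  (hf.dO_le_tsum ha hb).trans (hf.tsum_ancTerm_id_le ha hb)

/-- The summand at `r = b` contributes `Δ_b(f)` to the sum in `d_T(a,b)` but nothing to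
`d_O(a,b)`. -/
lemma dO_add_jump_le_tsum (hf : IsExcursion f) {a b : ℝ} (ha : 0 ≤ a) (hb : b ≤ 1)
    (hab : pre f a b) (hlt : a < b) :
    dO f a b + jump f b ≤ ∑' r, ancTerm f (fun _ => id) a b r := by
  have hbI : b ∈ Icc (0:ℝ) 1 := ⟨ha.trans hlt.le, hb⟩
  have hsingle := hasSum_ite_eq b (jump f b)
  have hle : ∀ r, ancTerm f (fun r => cdel f r 0) a b r + (if r = b then jump f b else 0) ≤
      ancTerm f (fun _ => id) a b r := by
    intro r
    rcases eq_or_ne r b with rfl | hrb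
    · have h : pre f a r ∧ a < r ∧ pre f r r := ⟨hab, hlt, hf.pre_refl hbI⟩
      rw [ancTerm, ancTerm, if_pos h, if_pos h, if_pos rfl, hf.xst_self hbI,
        cdel_zero_jump (hf.jump_nonneg r hbI), zero_add, id]
    · rw [if_neg hrb, add_zero]
      exact (le_abs_self _).trans (hf.abs_ancTerm_le (fun _ _ => abs_cdel_zero_le) a b r)
  have := ((hf.summable_ancTerm (fun _ _ => abs_cdel_zero_le) ha hb).add
    hsingle.summable).tsum_le_tsum hle (hf.summable_ancTerm_id ha hb)
  rwa [(hf.summable_ancTerm (fun _ _ => abs_cdel_zero_le) ha hb).tsum_add hsingle.summable,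
    hsingle.tsum_eq] at this

lemma dO_le_of_lt (hf : IsExcursion f) {a b : ℝ} (ha : 0 ≤ a) (hb : b ≤ 1)
    (hab : pre f a b) (hlt : a < b) : dO f a b ≤ lm f b - infIcc f a b := by
  have hjump : jump f b = f b - lm f b := rfl
  linarith [hf.dO_add_jump_le_tsum ha hb hab hlt, hf.tsum_ancTerm_id_le ha hb]

lemma dTanc_le_of_lt (hf : IsExcursion f) {a b : ℝ} (ha : 0 ≤ a) (hb : b ≤ 1)
    (hab : pre f a b) (hlt : a < b) : dTanc f a b ≤ lm f b - infIcc f a b := by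
  have hjump : jump f b = f b - lm f b := rfl
  rw [dTanc_eq_sub_tsum]
  linarith [hf.dO_add_jump_le_tsum ha hb hab hlt, hf.dO_nonneg a b]

lemma dTanc_add (hf : IsExcursion f) {a b c : ℝ} (ha : 0 ≤ a) (hc : c ≤ 1)
    (hab : pre f a b) (hbc : pre f b c) : dTanc f a c = dTanc f a b + dTanc f b c := by
  rcases hab.1.eq_or_lt with rfl | hlt
  · rw [dTanc_self, zero_add]
  · simp only [dTanc_eq_sub_tsum]
    rw [hf.tsum_ancTerm_split (φ := fun _ => id) (fun _ y hy => (abs_of_nonneg hy.1).le)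
        ha hc hab hlt hbc,
      xst_of_pre hbc, hf.infIcc_of_lt_of_pre ha hc hlt hbc, id, id, jump]
    ring

lemma dO_add (hf : IsExcursion f) {a b c : ℝ} (ha : 0 ≤ a) (hc : c ≤ 1)
    (hab : pre f a b) (hlt : a < b) (hbc : pre f b c) :
    dO f a c = dO f a b + cdel f b 0 (xst f b c) + dO f b c := by
  simp only [dO_eq_tsum]
  rw [hf.tsum_ancTerm_split (fun _ _ => abs_cdel_zero_le) ha hc hab hlt hbc,
    cdel_zero_jump (hf.jump_nonneg b ⟨ha.trans hlt.le, hbc.1.trans hc⟩)]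
  ring

end IsExcursion

lemma dL_comm (f : ℝ → ℝ) (s t : ℝ) : dL f s t = dL f t s := by
  rw [dL, dL, mrca_comm f s t, cdel_comm]
  ring

lemma dT_comm (f : ℝ → ℝ) (s t : ℝ) : dT f s t = dT f t s := by
  rw [dT, dT, mrca_comm f s t, add_comm]

lemma triangle_of_mrca_le {D : ℝ → ℝ → ℝ} (hD : ∀ s t, D s t = D t s)
    (h : ∀ s ∈ Icc (0:ℝ) 1, ∀ t ∈ Icc (0:ℝ) 1, ∀ u ∈ Icc (0:ℝ) 1,
      mrca f s t ≤ mrca f t u → D s u ≤ D s t + D t u)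
    {s t u : ℝ} (hs : s ∈ Icc (0:ℝ) 1) (ht : t ∈ Icc (0:ℝ) 1) (hu : u ∈ Icc (0:ℝ) 1) :
    D s u ≤ D s t + D t u := by
  rcases le_total (mrca f s t) (mrca f t u) with hle | hle
  · exact h s hs t ht u hu hle
  · have := h u hu t ht s hs (by rwa [mrca_comm f u t, mrca_comm f t s])
    rw [hD u s, hD u t, hD t s] at this
    linarith

def gapBound (f : ℝ → ℝ) (s t : ℝ) : ℝ := f s + lm f t - 2 * infIcc f s t

namespace IsExcursion

lemma dT_triangle_of_mrca_eq_left (hf : IsExcursion f) {s t u : ℝ} (hs : s ∈ Icc (0:ℝ) 1)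
    (ht : t ∈ Icc (0:ℝ) 1) (hu : u ∈ Icc (0:ℝ) 1) (hsu : mrca f s u = mrca f s t)
    (hpre : pre f (mrca f s t) (mrca f t u)) : dT f s u ≤ dT f s t + dT f t u := by
  obtain ⟨hm0, -, -⟩ := hf.mrca_spec hs ht
  obtain ⟨hm'0, hm't, hm'u⟩ := hf.mrca_spec ht hu
  rw [dT, dT, dT, hsu, hf.dTanc_add hm0 hu.2 hpre hm'u, hf.dTanc_add hm0 ht.2 hpre hm't]
  linarith [hf.dTanc_nonneg hm'0 ht.2 (b := t)]

lemma dT_triangle_of_mrca_eq_mid (hf : IsExcursion f) {s t u : ℝ} (hs : s ∈ Icc (0:ℝ) 1)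
    (ht : t ∈ Icc (0:ℝ) 1) (hu : u ∈ Icc (0:ℝ) 1) (htu : mrca f t u = mrca f s t)
    (hpre : pre f (mrca f s t) (mrca f s u)) : dT f s u ≤ dT f s t + dT f t u := by
  obtain ⟨hm0, -, -⟩ := hf.mrca_spec hs ht
  obtain ⟨-, hm's, hm'u⟩ := hf.mrca_spec hs hu
  rw [dT, dT, dT, htu, hf.dTanc_add hm0 hs.2 hpre hm's, hf.dTanc_add hm0 hu.2 hpre hm'u]
  linarith [hf.dTanc_nonneg hm0 ht.2 (b := t),
    hf.dTanc_nonneg hm0 (hm's.1.trans hs.2) (b := mrca f s u)]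

lemma dL_triangle_of_mrca_eq_left (hf : IsExcursion f) {s t u : ℝ} (hs : s ∈ Icc (0:ℝ) 1)
    (ht : t ∈ Icc (0:ℝ) 1) (hu : u ∈ Icc (0:ℝ) 1) (hsu : mrca f s u = mrca f s t)
    (hpre : pre f (mrca f s t) (mrca f t u)) : dL f s u ≤ dL f s t + dL f t u := by
  obtain ⟨hm0, hms, hmt⟩ := hf.mrca_spec hs ht
  obtain ⟨hm'0, hm't, hm'u⟩ := hf.mrca_spec ht hu
  have hmu : pre f (mrca f s t) u := hsu ▸ (hf.mrca_spec hs hu).2.2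
  rw [dL, dL, dL, hsu]
  set m := mrca f s t
  set m' := mrca f t u
  rcases hpre.1.eq_or_lt with hmm' | hlt
  · rw [← hmm']
    linarith [cdel_triangle (hf.xst_mem_Icc hms) (hf.xst_mem_Icc hmt) (hf.xst_mem_Icc hmu),
      hf.dO_nonneg m t]
  · have hm'I : m' ∈ Icc (0:ℝ) 1 := ⟨hm'0, hm't.1.trans ht.2⟩
    rw [hf.xst_of_lt_of_pre hm0 hu.2 hlt hm'u, ← hf.xst_of_lt_of_pre hm0 ht.2 hlt hm't,
      hf.dO_add hm0 hu.2 hpre hlt hm'u, hf.dO_add hm0 ht.2 hpre hlt hm't]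
    linarith [cdel_triangle ⟨le_rfl, hf.jump_nonneg m' hm'I⟩ (hf.xst_mem_Icc hm't)
      (hf.xst_mem_Icc hm'u), hf.dO_nonneg m' t]

lemma dL_triangle_of_mrca_eq_mid (hf : IsExcursion f) {s t u : ℝ} (hs : s ∈ Icc (0:ℝ) 1)
    (ht : t ∈ Icc (0:ℝ) 1) (hu : u ∈ Icc (0:ℝ) 1) (htu : mrca f t u = mrca f s t)
    (hpre : pre f (mrca f s t) (mrca f s u)) : dL f s u ≤ dL f s t + dL f t u := by
  obtain ⟨hm0, hms, hmt⟩ := hf.mrca_spec hs ht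
  obtain ⟨hm'0, hm's, hm'u⟩ := hf.mrca_spec hs hu
  have hmu : pre f (mrca f s t) u := htu ▸ (hf.mrca_spec ht hu).2.2
  rw [dL, dL, dL, htu]
  set m := mrca f s t
  set m' := mrca f s u
  rcases hpre.1.eq_or_lt with hmm' | hlt
  · rw [← hmm']
    linarith [cdel_triangle (hf.xst_mem_Icc hms) (hf.xst_mem_Icc hmt) (hf.xst_mem_Icc hmu),
      hf.dO_nonneg m t]
  · have hm'I : m' ∈ Icc (0:ℝ) 1 := ⟨hm'0, hm's.1.trans hs.2⟩
    rw [hf.dO_add hm0 hs.2 hpre hlt hm's, hf.dO_add hm0 hu.2 hpre hlt hm'u]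
    linarith [cdel_triangle (hf.xst_mem_Icc hm's) ⟨le_rfl, hf.jump_nonneg m' hm'I⟩
      (hf.xst_mem_Icc hm'u), cdel_comm f m' (xst f m' s) 0,
      cdel_nonneg (hf.xst_mem_Icc hms) (hf.xst_mem_Icc hmt),
      cdel_nonneg (hf.xst_mem_Icc hmt) (hf.xst_mem_Icc hmu), hf.dO_nonneg m t, hf.dO_nonneg m m']

lemma dT_triangle (hf : IsExcursion f) {s t u : ℝ} (hs : s ∈ Icc (0:ℝ) 1)
    (ht : t ∈ Icc (0:ℝ) 1) (hu : u ∈ Icc (0:ℝ) 1) : dT f s u ≤ dT f s t + dT f t u :=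
  triangle_of_mrca_le (dT_comm f) (fun _ hs _ ht _ hu hle =>
    (hf.mrca_cases hs ht hu hle).elim (fun h => hf.dT_triangle_of_mrca_eq_left hs ht hu h.1 h.2)
      (fun h => hf.dT_triangle_of_mrca_eq_mid hs ht hu h.1 h.2)) hs ht hu

lemma dL_triangle (hf : IsExcursion f) {s t u : ℝ} (hs : s ∈ Icc (0:ℝ) 1)
    (ht : t ∈ Icc (0:ℝ) 1) (hu : u ∈ Icc (0:ℝ) 1) : dL f s u ≤ dL f s t + dL f t u :=
  triangle_of_mrca_le (dL_comm f) (fun _ hs _ ht _ hu hle =>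
    (hf.mrca_cases hs ht hu hle).elim (fun h => hf.dL_triangle_of_mrca_eq_left hs ht hu h.1 h.2)
      (fun h => hf.dL_triangle_of_mrca_eq_mid hs ht hu h.1 h.2)) hs ht hu

lemma dL_le_gapBound (hf : IsExcursion f) {s t : ℝ} (hs : s ∈ Icc (0:ℝ) 1) (ht : t ∈ Icc (0:ℝ) 1)
    (hst : s < t) : dL f s t ≤ gapBound f s t := by
  obtain ⟨hm0, hms, hmt⟩ := hf.mrca_spec hs ht
  have hcdel : cdel f (mrca f s t) (xst f (mrca f s t) s) (xst f (mrca f s t) t) ≤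
      infIcc f (mrca f s t) s - infIcc f (mrca f s t) t := by
    refine (cdel_le_abs _ _ _ _).trans_eq ?_
    rw [xst_of_pre hms, xst_of_pre hmt, sub_sub_sub_cancel_right,
      abs_of_nonneg (sub_nonneg.2 (hf.infIcc_anti le_rfl hst.le hms.1))]
  rw [dL, gapBound]
  linarith [hf.dO_le hm0 hs.2 (b := s), hf.dO_le_of_lt hm0 ht.2 hmt (hms.1.trans_lt hst),
    hf.infIcc_mrca hs ht hst.le]

lemma dT_le_gapBound (hf : IsExcursion f) {s t : ℝ} (hs : s ∈ Icc (0:ℝ) 1) (ht : t ∈ Icc (0:ℝ) 1)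
    (hst : s < t) : dT f s t ≤ gapBound f s t := by
  obtain ⟨hm0, hms, hmt⟩ := hf.mrca_spec hs ht
  rw [dT, gapBound]
  linarith [dTanc_le f (mrca f s t) s, hf.dTanc_le_of_lt hm0 ht.2 hmt (hms.1.trans_lt hst),
    hf.infIcc_mrca hs ht hst.le, hf.infIcc_anti le_rfl hst.le hms.1]

end IsExcursion

namespace IsExcursion

lemma isPseudoDistOn_dL (hf : IsExcursion f) : IsPseudoDistOn (dL f) (Icc 0 1) where
  self_eq_zero s hs := by rw [dL, hf.mrca_self hs, dO_self, cdel_self (hf.jump_nonneg s hs)]; ring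
  symm s _ t _ := dL_comm f s t
  triangle _ hs _ ht _ hu := hf.dL_triangle hs ht hu

lemma isPseudoDistOn_dT (hf : IsExcursion f) : IsPseudoDistOn (dT f) (Icc 0 1) where
  self_eq_zero s hs := by rw [dT, hf.mrca_self hs, dTanc_self, add_zero]
  symm s _ t _ := dT_comm f s t
  triangle _ hs _ ht _ hu := hf.dT_triangle hs ht hu

lemma tendsto_gapBound_right (hf : IsExcursion f) {s : ℝ} (hs : s ∈ Ico (0:ℝ) 1) :
    Tendsto (gapBound f s) (𝓝[>] s) (𝓝 0) := by
  refine Metric.tendsto_nhds.2 fun ε hε => ?_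
  obtain ⟨l, hsl, hl⟩ := mem_nhdsGT_iff_exists_Ioo_subset.1
    (Metric.tendsto_nhds.1 (hf.rightCont s hs) (ε / 4) (by positivity))
  filter_upwards [Ioo_mem_nhdsGT (lt_min hsl hs.2)] with t ht
  have htI : t ∈ Ioc (0:ℝ) 1 := ⟨hs.1.trans_lt ht.1, ht.2.le.trans (min_le_right _ _)⟩
  have hclose : ∀ v ∈ Ioc s t, |f v - f s| < ε / 4 := fun v hv =>
    (Real.dist_eq _ _).symm.trans_lt (hl ⟨hv.1, hv.2.trans_lt (ht.2.trans_le (min_le_left _ _))⟩)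
  have h₁ : lm f t ≤ f s + ε / 4 := hf.lm_le_of_forall_Ioo htI ht.1 fun v hv => by
    linarith [abs_sub_lt_iff.1 (hclose v ⟨hv.1, hv.2.le⟩)]
  have h₂ : f s - ε / 4 ≤ infIcc f s t := le_infIcc ht.1.le fun v hv => by
    rcases hv.1.eq_or_lt with rfl | hsv
    · linarith
    · linarith [abs_sub_lt_iff.1 (hclose v ⟨hsv, hv.2⟩)]
  have h₃ : f s - ε / 4 ≤ lm f t := hf.le_lm_of_forall_Ioo htI ht.1 fun v hv => by
    linarith [abs_sub_lt_iff.1 (hclose v ⟨hv.1, hv.2.le⟩)]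
  have h₄ : infIcc f s t ≤ f s := hf.infIcc_le ⟨le_rfl, ht.1.le⟩
  rw [gapBound, Real.dist_eq, sub_zero, abs_lt]
  constructor <;> linarith

lemma tendsto_gapBound_left (hf : IsExcursion f) {s : ℝ} (hs : s ∈ Ioc (0:ℝ) 1) :
    Tendsto (fun t => gapBound f t s) (𝓝[<] s) (𝓝 0) := by
  refine Metric.tendsto_nhds.2 fun ε hε => ?_
  obtain ⟨l, hls, hl⟩ := mem_nhdsLT_iff_exists_Ioo_subset.1
    (Metric.tendsto_nhds.1 (hf.tendsto_lm hs) (ε / 4) (by positivity))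
  filter_upwards [Ioo_mem_nhdsLT hls] with t ht
  have hclose : ∀ v ∈ Ico t s, |f v - lm f s| < ε / 4 := fun v hv =>
    (Real.dist_eq _ _).symm.trans_lt (hl ⟨ht.1.trans_le hv.1, hv.2⟩)
  have h₁ : lm f s - ε / 4 ≤ infIcc f t s := le_infIcc ht.2.le fun v hv => by
    rcases hv.2.eq_or_lt with rfl | hvs
    · linarith [hf.lm_le_self ⟨hs.1.le, hs.2⟩]
    · linarith [abs_sub_lt_iff.1 (hclose v ⟨hv.1, hvs⟩)]
  have h₂ : infIcc f t s ≤ f t := hf.infIcc_le ⟨le_rfl, ht.2.le⟩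
  have h₃ := abs_sub_lt_iff.1 (hclose t ⟨le_rfl, ht.2⟩)
  rw [gapBound, Real.dist_eq, sub_zero, abs_lt]
  constructor <;> linarith

lemma tendsto_of_le_gapBound (hf : IsExcursion f) {D : ℝ → ℝ → ℝ} (hD : IsPseudoDistOn D (Icc 0 1))
    (hgap : ∀ s ∈ Icc (0:ℝ) 1, ∀ t ∈ Icc (0:ℝ) 1, s < t → D s t ≤ gapBound f s t)
    {s : ℝ} (hs : s ∈ Icc (0:ℝ) 1) : Tendsto (D s) (𝓝[Icc 0 1] s) (𝓝 0) := by
  have hsplit : Icc (0:ℝ) 1 = Icc 0 1 ∩ Iio s ∪ {s} ∪ Icc 0 1 ∩ Ioi s := by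
    ext t
    simp only [mem_union, mem_inter_iff, mem_Iio, mem_Ioi, mem_singleton_iff]
    constructor
    · intro ht
      rcases lt_trichotomy t s with h | h | h <;> simp [ht, h]
    · rintro ((⟨ht, -⟩ | rfl) | ⟨ht, -⟩)
      exacts [ht, hs, ht]
  rw [hsplit, nhdsWithin_union, nhdsWithin_union, nhdsWithin_singleton]
  refine ((?_ : Tendsto (D s) _ _).sup ?_).sup ?_
  · rcases hs.1.eq_or_lt with rfl | hs0
    · rw [show Icc (0:ℝ) 1 ∩ Iio 0 = ∅ from
        eq_empty_of_forall_notMem fun t ht => ht.2.not_ge ht.1.1, nhdsWithin_empty]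
      exact tendsto_bot
    refine squeeze_zero' ?_ ?_ ((hf.tendsto_gapBound_left ⟨hs0, hs.2⟩).mono_left
      (nhdsWithin_mono _ inter_subset_right))
    · filter_upwards [self_mem_nhdsWithin] with t ht using hD.nonneg hs ht.1
    · filter_upwards [self_mem_nhdsWithin] with t ht
      exact (hD.symm s hs t ht.1).trans_le (hgap t ht.1 s hs ht.2)
  · simpa [hD.self_eq_zero s hs] using tendsto_pure_nhds (D s) s
  · rcases hs.2.eq_or_lt with rfl | hs1
    · rw [show Icc (0:ℝ) 1 ∩ Ioi 1 = ∅ from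
        eq_empty_of_forall_notMem fun t ht => ht.2.not_ge ht.1.2, nhdsWithin_empty]
      exact tendsto_bot
    refine squeeze_zero' ?_ ?_ ((hf.tendsto_gapBound_right ⟨hs.1, hs1⟩).mono_left
      (nhdsWithin_mono _ inter_subset_right))
    · filter_upwards [self_mem_nhdsWithin] with t ht using hD.nonneg hs ht.1
    · filter_upwards [self_mem_nhdsWithin] with t ht using hgap s hs t ht.1 ht.2

end IsExcursion

theorem statement5 (f : ℝ → ℝ) (hf : IsExcursion f) :
    ContinuousOn (fun p : ℝ × ℝ => dL f p.1 p.2) (Icc (0:ℝ) 1 ×ˢ Icc (0:ℝ) 1) ∧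
    ContinuousOn (fun p : ℝ × ℝ => dT f p.1 p.2) (Icc (0:ℝ) 1 ×ˢ Icc (0:ℝ) 1) ∧
    ContinuousOn (fun p : ℝ × ℝ => dV f p.1 p.2) (Icc (0:ℝ) 1 ×ˢ Icc (0:ℝ) 1) ∧
    (∃ (X : Type) (m : MetricSpace X) (q : Icc (0:ℝ) 1 → X), CompactSpace X ∧
        Function.Surjective q ∧ ∀ s t : Icc (0:ℝ) 1, dist (q s) (q t) = dL f s.1 t.1) ∧
    (∃ (X : Type) (m : MetricSpace X) (q : Icc (0:ℝ) 1 → X), CompactSpace X ∧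
        Function.Surjective q ∧ ∀ s t : Icc (0:ℝ) 1, dist (q s) (q t) = dT f s.1 t.1) ∧
    (∃ (X : Type) (m : MetricSpace X) (q : Icc (0:ℝ) 1 → X), CompactSpace X ∧
        Function.Surjective q ∧ ∀ s t : Icc (0:ℝ) 1, dist (q s) (q t) = dV f s.1 t.1) := by
  have hL := hf.isPseudoDistOn_dL
  have hT := hf.isPseudoDistOn_dT
  have hV : IsPseudoDistOn (dV f) (Icc 0 1) := hT.add (hL.const_mul zero_le_two)
  have hLc : ∀ s ∈ Icc (0:ℝ) 1, Tendsto (dL f s) (𝓝[Icc 0 1] s) (𝓝 0) := fun _ hs =>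
    hf.tendsto_of_le_gapBound hL (fun _ hs _ ht => hf.dL_le_gapBound hs ht) hs
  have hTc : ∀ s ∈ Icc (0:ℝ) 1, Tendsto (dT f s) (𝓝[Icc 0 1] s) (𝓝 0) := fun _ hs =>
    hf.tendsto_of_le_gapBound hT (fun _ hs _ ht => hf.dT_le_gapBound hs ht) hs
  have hVc : ∀ s ∈ Icc (0:ℝ) 1, Tendsto (dV f s) (𝓝[Icc 0 1] s) (𝓝 0) := fun s hs => by
    have := (hTc s hs).add ((hLc s hs).const_mul 2)
    rwa [mul_zero, add_zero] at this
  exact ⟨hL.continuousOn hLc, hT.continuousOn hTc, hV.continuousOn hVc,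
    hL.exists_compactSpace_quotient isCompact_Icc hLc,
    hT.exists_compactSpace_quotient isCompact_Icc hTc,
    hV.exists_compactSpace_quotient isCompact_Icc hVc⟩
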